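/- Let k ≥ 3 and for c > k let λ_{k,c} be the unique positive root of λ f_{k−1}(λ)/f_k(λ) = c, and q_{k,c} = λ_{k,c}^{k−1}/((k−1)! f_{k−1}(λ_{k,c})). Then c ↦ (k−1) q_{k,c} is strictly decreasing on (k, ∞), and at c = c_k' := μ* f_{k−1}(μ*)/f_k(μ*) (where μ* is the unique positive solution of μ^{k−1}/(k−2)! = f_{k−1}(μ)) it takes the value 1. -/

import Mathlib

/-!
The map `g(λ) = λ f_{k-1}(λ) / f_k(λ)` is strictly increasing on `(0, ∞)`, so `λ_{k,c}` is
strictly increasing in `c`, while `λ^{k-1} / f_{k-1}(λ) = (∑ₙ λⁿ / (n+k-1)!)⁻¹` is strictly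
decreasing; together they make `c ↦ (k-1) q_{k,c}` strictly decreasing.

Positivity of `g'` comes down to `x^{j+1} f_{j+1} < (j+1) x^j f_{j+2} + j! f_{j+1}²`. Expanding
`f_{j+1}²` as a Cauchy product, this holds coefficientwise because of the factorial inequality
`(a+m+1)! (b+m+1)! < m! (a+b+m+2)!`.

Since `g(λ) > k` for every `λ > 0`, `c'_k = g(μ*)` lies in `(k, ∞)` and injectivity of `g` gives
`λ_{k,c'_k} = μ*`; the equation defining `μ*` then says exactly that `(k-1) q_{k,c'_k} = 1`.
-/

open Real Finset

noncomputable def fTail (j : ℕ) (x : ℝ) : ℝ :=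
  Real.exp x - ∑ i ∈ Finset.range j, x ^ i / (Nat.factorial i : ℝ)

open scoped Nat

lemma hasSum_fTail (j : ℕ) (x : ℝ) :
    HasSum (fun n ↦ x ^ (n + j) / (n + j)!) (fTail j x) := by
  rw [fTail, exp_eq_exp_ℝ]
  exact (hasSum_nat_add_iff' j).2 (NormedSpace.expSeries_div_hasSum_exp x)

lemma fTail_pos (j : ℕ) {x : ℝ} (hx : 0 < x) : 0 < fTail j x :=
  hasSum_lt (f := 0) (i := 0) (fun n ↦ by positivity) (by positivity) hasSum_zero
    (hasSum_fTail j x)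

lemma fTail_eq_fTail_succ_add (j : ℕ) (x : ℝ) : fTail j x = fTail (j + 1) x + x ^ j / j ! := by
  simp only [fTail, sum_range_succ]
  ring

lemma hasDerivAt_fTail_succ (j : ℕ) (x : ℝ) : HasDerivAt (fTail (j + 1)) (fTail j x) x := by
  induction j with
  | zero =>
    have h : fTail 1 = fun y ↦ exp y - 1 := funext fun y ↦ by simp [fTail]
    simpa [h, fTail] using (hasDerivAt_exp x).sub_const 1
  | succ j ih =>
    have h : fTail (j + 2) = fun y ↦ fTail (j + 1) y - y ^ (j + 1) / (j + 1)! := by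
      funext y
      rw [fTail_eq_fTail_succ_add (j + 1) y]
      ring
    rw [h]
    refine (ih.sub ((hasDerivAt_pow (j + 1) x).div_const _)).congr_deriv ?_
    rw [fTail_eq_fTail_succ_add j x, Nat.factorial_succ]
    push_cast
    field_simp
    ring

lemma mul_pow_div_factorial (x : ℝ) (m : ℕ) :
    x * (x ^ m / m !) = (m + 1) * (x ^ (m + 1) / (m + 1)!) := by
  rw [Nat.factorial_succ]
  push_cast
  field_simp
  ring

lemma hasSum_mul_fTail_sub (j : ℕ) (c x : ℝ) :
    HasSum (fun n : ℕ ↦ (n + j + 1 - c) * (x ^ (n + j + 1) / (n + j + 1)!))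
      (x * fTail j x - c * fTail (j + 1) x) := by
  refine (((hasSum_fTail j x).mul_left x).sub ((hasSum_fTail (j + 1) x).mul_left c)).congr_fun
    fun n ↦ ?_
  rw [mul_pow_div_factorial, ← add_assoc]
  push_cast
  ring

lemma add_one_mul_fTail_succ_lt (j : ℕ) {x : ℝ} (hx : 0 < x) :
    (j + 1) * fTail (j + 1) x < x * fTail j x := by
  have h := hasSum_mul_fTail_sub j (j + 1) x
  simp only [show ∀ n : ℕ, (n : ℝ) + j + 1 - (j + 1) = n by intro n; ring] at h
  exact sub_pos.1 <| hasSum_lt (f := 0) (i := 1) (fun n ↦ by positivity) (by simp; positivity)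
    hasSum_zero h

lemma factorial_add_mul_factorial_add_lt (m a b : ℕ) :
    (a + m + 1)! * (b + m + 1)! < m ! * (a + b + m + 2)! := by
  induction a with
  | zero =>
    rw [zero_add, Nat.factorial_succ m, show 0 + b + m + 2 = b + m + 1 + 1 by omega,
      Nat.factorial_succ (b + m + 1)]
    calc (m + 1) * m ! * (b + m + 1)! = (m + 1) * (m ! * (b + m + 1)!) := by ring
      _ < (b + m + 1 + 1) * (m ! * (b + m + 1)!) :=
        Nat.mul_lt_mul_of_pos_right (by omega) (by positivity)
      _ = m ! * ((b + m + 1 + 1) * (b + m + 1)!) := by ring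
  | succ a ih =>
    rw [show a + 1 + m + 1 = a + m + 1 + 1 by omega, Nat.factorial_succ,
      show a + 1 + b + m + 2 = a + b + m + 2 + 1 by omega, Nat.factorial_succ (a + b + m + 2)]
    calc (a + m + 1 + 1) * (a + m + 1)! * (b + m + 1)!
        = (a + m + 2) * ((a + m + 1)! * (b + m + 1)!) := by ring
      _ < (a + m + 2) * (m ! * (a + b + m + 2)!) := by gcongr
      _ ≤ (a + b + m + 2 + 1) * (m ! * (a + b + m + 2)!) := Nat.mul_le_mul_right _ (by omega)
      _ = m ! * ((a + b + m + 2 + 1) * (a + b + m + 2)!) := by ring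

lemma pow_mul_pow_div_factorial_lt (j a b : ℕ) {x : ℝ} (hx : 0 < x) :
    x ^ j * (x ^ (a + b + j + 2) / (a + b + j + 2)!) <
      j ! * (x ^ (a + j + 1) / (a + j + 1)! * (x ^ (b + j + 1) / (b + j + 1)!)) := by
  have hpow : x ^ j * x ^ (a + b + j + 2) = x ^ (a + j + 1) * x ^ (b + j + 1) := by
    rw [← pow_add, ← pow_add]
    ring_nf
  have hfac : ((a + j + 1)! * (b + j + 1)! : ℝ) < j ! * (a + b + j + 2)! := by
    exact_mod_cast factorial_add_mul_factorial_add_lt j a b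
  rw [mul_div_assoc', hpow, div_mul_div_comm, mul_div_assoc', div_lt_div_iff₀ (by positivity)
    (by positivity)]
  have hP : 0 < x ^ (a + j + 1) * x ^ (b + j + 1) := by positivity
  nlinarith

lemma pow_mul_fTail_lt (j : ℕ) {x : ℝ} (hx : 0 < x) :
    x ^ (j + 1) * fTail (j + 1) x <
      (j + 1) * x ^ j * fTail (j + 2) x + j ! * fTail (j + 1) x ^ 2 := by
  set A : ℕ → ℝ := fun n ↦ x ^ (n + (j + 1)) / (n + (j + 1))!
  have hA : HasSum A (fTail (j + 1) x) := hasSum_fTail (j + 1) x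
  have hAnorm : Summable (fun n ↦ ‖A n‖) := hA.summable.norm
  have hsq : HasSum (fun n ↦ j ! * ∑ p ∈ antidiagonal n, A p.1 * A p.2)
      (j ! * fTail (j + 1) x ^ 2) := by
    rw [sq, ← hA.tsum_eq, tsum_mul_tsum_eq_tsum_sum_antidiagonal_of_summable_norm hAnorm hAnorm]
    have hsum := (summable_norm_sum_mul_antidiagonal_of_summable_norm hAnorm hAnorm).of_norm
    exact hsum.hasSum.mul_left _
  have hdiff : HasSum (fun n : ℕ ↦ x ^ j * ((n + 1) * (x ^ (n + j + 2) / (n + j + 2)!)))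
      (x ^ (j + 1) * fTail (j + 1) x - (j + 1) * x ^ j * fTail (j + 2) x) := by
    have e : x ^ (j + 1) * fTail (j + 1) x - (j + 1) * x ^ j * fTail (j + 2) x =
        x ^ j * (x * fTail (j + 1) x - (j + 1) * fTail (j + 1 + 1) x) := by ring
    rw [e]
    refine ((hasSum_mul_fTail_sub (j + 1) (j + 1) x).mul_left (x ^ j)).congr_fun fun n ↦ ?_
    push_cast
    ring_nf
  have hterm : ∀ n : ℕ, x ^ j * ((n + 1) * (x ^ (n + j + 2) / (n + j + 2)!)) <
      j ! * ∑ p ∈ antidiagonal n, A p.1 * A p.2 := by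
    intro n
    rw [mul_sum]
    calc x ^ j * ((n + 1) * (x ^ (n + j + 2) / (n + j + 2)!))
        = ∑ _p ∈ antidiagonal n, x ^ j * (x ^ (n + j + 2) / (n + j + 2)!) := by
          rw [sum_const, Nat.card_antidiagonal]
          ring
      _ < ∑ p ∈ antidiagonal n, j ! * (A p.1 * A p.2) := by
        refine sum_lt_sum_of_nonempty ⟨(0, n), by simp⟩ fun p hp ↦ ?_
        rw [HasAntidiagonal.mem_antidiagonal] at hp
        subst hp
        simpa only [A, ← add_assoc] using pow_mul_pow_div_factorial_lt j p.1 p.2 hx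
  linarith [hasSum_lt (fun n ↦ (hterm n).le) (hterm 0) hdiff hsq]

lemma strictMonoOn_mul_fTail_div_fTail (j : ℕ) :
    StrictMonoOn (fun y ↦ y * fTail (j + 1) y / fTail (j + 2) y) (Set.Ioi 0) := by
  have hderiv : ∀ x : ℝ, 0 < x → HasDerivAt (fun y ↦ y * fTail (j + 1) y / fTail (j + 2) y)
      (((fTail (j + 1) x + x * fTail j x) * fTail (j + 2) x - x * fTail (j + 1) x ^ 2) /
        fTail (j + 2) x ^ 2) x := fun x hx ↦
    (((hasDerivAt_id' x).fun_mul (hasDerivAt_fTail_succ j x)).fun_div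
      (hasDerivAt_fTail_succ (j + 1) x) (fTail_pos _ hx).ne').congr_deriv (by ring)
  refine strictMonoOn_of_deriv_pos (convex_Ioi 0)
    (fun x hx ↦ (hderiv x hx).continuousAt.continuousWithinAt) fun x hx ↦ ?_
  rw [interior_Ioi] at hx
  rw [(hderiv x hx).deriv]
  refine div_pos ?_ (pow_pos (fTail_pos _ hx) 2)
  -- times `(j+1)!`, the numerator of `g'` is the gap in `pow_mul_fTail_lt (j + 1)`
  have e : ((j + 1)! : ℝ) * ((fTail (j + 1) x + x * fTail j x) * fTail (j + 2) x
        - x * fTail (j + 1) x ^ 2) =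
      (j + 2) * x ^ (j + 1) * fTail (j + 3) x + (j + 1)! * fTail (j + 2) x ^ 2
        - x ^ (j + 2) * fTail (j + 2) x := by
    have h₀ := fTail_eq_fTail_succ_add j x
    have h₁ := fTail_eq_fTail_succ_add (j + 1) x
    have h₂ := fTail_eq_fTail_succ_add (j + 2) x
    rw [h₀, h₁, h₂, Nat.factorial_succ (j + 1), Nat.factorial_succ j]
    push_cast
    field_simp
    ring
  have key := pow_mul_fTail_lt (j + 1) hx
  simp only [show j + 1 + 1 = j + 2 from rfl, show j + 1 + 2 = j + 3 from rfl] at key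
  push_cast at key
  have hprod : (0 : ℝ) < (j + 1)! * ((fTail (j + 1) x + x * fTail j x) * fTail (j + 2) x
      - x * fTail (j + 1) x ^ 2) := by
    rw [e]
    linarith
  exact pos_of_mul_pos_right hprod (by positivity)

lemma strictAntiOn_pow_div_fTail (j : ℕ) :
    StrictAntiOn (fun y ↦ y ^ j / fTail j y) (Set.Ioi 0) := by
  have hS : ∀ y : ℝ, 0 < y → HasSum (fun n ↦ y ^ n / (n + j)!) (fTail j y / y ^ j) :=
    fun y hy ↦ ((hasSum_fTail j y).div_const (y ^ j)).congr_fun fun n ↦ by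
      rw [pow_add]
      field_simp
  intro x (hx : 0 < x) y (hy : 0 < y) hxy
  have hlt : fTail j x / x ^ j < fTail j y / y ^ j :=
    hasSum_lt (i := 1) (fun n ↦ by dsimp; gcongr) (by simp only [pow_one]; gcongr) (hS x hx)
      (hS y hy)
  show y ^ j / fTail j y < x ^ j / fTail j x
  rw [← inv_div, ← inv_div (fTail j x)]
  exact (inv_lt_inv₀ (div_pos (fTail_pos j hy) (pow_pos hy j))
    (div_pos (fTail_pos j hx) (pow_pos hx j))).2 hlt

/-- with `λ_{k,c}` the unique positive root of `λ f_{k-1}(λ)/f_k(λ) = c`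
(for `c > k`) and `q_{k,c} = λ_{k,c}^{k-1}/((k-1)! f_{k-1}(λ_{k,c}))`, the map
`c ↦ (k-1) q_{k,c}` is strictly decreasing on `(k, ∞)`, and it takes the value `1` at
`c = c_k' := μ* f_{k-1}(μ*)/f_k(μ*)` where `μ*` is the unique positive solution of
`μ^{k-1}/(k-2)! = f_{k-1}(μ)`. -/
theorem q_strictAnti_and_value_one (k : ℕ) (hk : 3 ≤ k)
    (lam : ℝ → ℝ)
    (hlam : ∀ c : ℝ, (k : ℝ) < c →
      0 < lam c ∧ lam c * fTail (k - 1) (lam c) / fTail k (lam c) = c)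
    (μstar : ℝ) (hμpos : 0 < μstar)
    (hμeq : μstar ^ (k - 1) / (Nat.factorial (k - 2) : ℝ) = fTail (k - 1) μstar) :
    StrictAntiOn
      (fun c : ℝ => ((k : ℝ) - 1) *
        (lam c ^ (k - 1) / ((Nat.factorial (k - 1) : ℝ) * fTail (k - 1) (lam c))))
      (Set.Ioi (k : ℝ)) ∧
    ((k : ℝ) - 1) *
        (lam (μstar * fTail (k - 1) μstar / fTail k μstar) ^ (k - 1) /
          ((Nat.factorial (k - 1) : ℝ) *
            fTail (k - 1) (lam (μstar * fTail (k - 1) μstar / fTail k μstar)))) = 1 := by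
  obtain ⟨j, rfl⟩ : ∃ j, k = j + 2 := ⟨k - 2, by omega⟩
  simp only [Nat.add_sub_cancel, show j + 2 - 1 = j + 1 from rfl] at hlam hμeq ⊢
  have hq : ∀ y : ℝ, 0 < y →
      (((j + 2 : ℕ) : ℝ) - 1) * (y ^ (j + 1) / ((j + 1)! * fTail (j + 1) y)) =
        y ^ (j + 1) / fTail (j + 1) y / j ! := by
    intro y hy
    have := (fTail_pos (j + 1) hy).ne'
    rw [Nat.factorial_succ]
    push_cast
    field_simp
    ring
  have hg := strictMonoOn_mul_fTail_div_fTail j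
  constructor
  · intro c₁ hc₁ c₂ hc₂ hc
    obtain ⟨hpos₁, heq₁⟩ := hlam c₁ hc₁
    obtain ⟨hpos₂, heq₂⟩ := hlam c₂ hc₂
    have hlt : lam c₁ < lam c₂ := (hg.lt_iff_lt hpos₁ hpos₂).1 (by simpa only [heq₁, heq₂])
    simp only [hq _ hpos₁, hq _ hpos₂]
    exact div_lt_div_of_pos_right (strictAntiOn_pow_div_fTail (j + 1) hpos₁ hpos₂ hlt)
      (by positivity)
  · have hc : ((j + 2 : ℕ) : ℝ) < μstar * fTail (j + 1) μstar / fTail (j + 2) μstar := by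
      have h := add_one_mul_fTail_succ_lt (j + 1) hμpos
      rw [show j + 1 + 1 = j + 2 from rfl] at h
      rw [lt_div_iff₀ (fTail_pos _ hμpos)]
      push_cast at h ⊢
      linarith
    obtain ⟨hpos, heq⟩ := hlam _ hc
    rw [hg.injOn hpos hμpos heq, hq _ hμpos, ← hμeq]
    field_simp
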